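/- Let m ∈ ℂ with Re m > 0 and m ∉ {1/n : n ∈ ℕ, n ≥ 1}. Define, for x ∈ (0,1], U₁(x) := ∑_{k=0}^∞ (−1)^k·x^{km} / ( k!·m^k·∏_{j=1}^k (jm−1) ) and U₂(x) := x·∑_{k=0}^∞ (−1)^k·x^{km} / ( k!·m^k·∏_{j=1}^k (jm+1) ), where x^{km} := exp(km·log x) for real x > 0 and the empty product equals 1. Then both series converge locally uniformly on (0,1], the functions U₁ and U₂ are twice differentiable on (0,1) and satisfy U₁''(x) + x^{m−2}·U₁(x) = 0 and U₂''(x) + x^{m−2}·U₂(x) = 0 for all x ∈ (0,1), and their Wronskian satisfies U₁(x)·U₂'(x) − U₁'(x)·U₂(x) = 1 for all x ∈ (0,1). -/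

import Mathlib

/-!
`U₁` and `U₂` are Frobenius series `∑ cₖ x^{km+s}` at the two roots `s = 0, 1` of the indicial
equation `s (s - 1) = 0`. Their coefficients satisfy `c_{k+1} ((k+1)m+s) ((k+1)m+s-1) = -cₖ`, so
`|c_{k+1} / cₖ| → 0` and `cₖ` decays faster than any power of `k`. This justifies differentiating
termwise on `(0,1)`, where the recursion turns the twice differentiated series into `-x^{m-2}` times
the original one. The Wronskian of two solutions of `y'' + q y = 0` is constant, and its limit at
`0⁺` is `1`, because `U₁ → 1`, `U₂' → 1` and `U₁' U₂ = (∑ cₖ km x^{km}) (∑ dₖ x^{km}) → 0`.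
-/

open Set Filter Topology

/-- Coefficient of the series for `U₁`: `(−1)^k / (k! mᵏ ∏_{j=1}^k (jm−1))`. -/
noncomputable def besselCoeff₁ (m : ℂ) (k : ℕ) : ℂ :=
  (-1) ^ k / ((k.factorial : ℂ) * m ^ k * ∏ j ∈ Finset.range k, (((j:ℂ) + 1) * m - 1))

/-- Coefficient of the series for `U₂`: `(−1)^k / (k! mᵏ ∏_{j=1}^k (jm+1))`. -/
noncomputable def besselCoeff₂ (m : ℂ) (k : ℕ) : ℂ :=
  (-1) ^ k / ((k.factorial : ℂ) * m ^ k * ∏ j ∈ Finset.range k, (((j:ℂ) + 1) * m + 1))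

/-- `U₁(x) = ∑_{k≥0} (−1)^k x^{km} / (k! mᵏ ∏_{j=1}^k (jm−1))`, where `x^{km} = e^{km log x}`. -/
noncomputable def besselU₁ (m : ℂ) (x : ℝ) : ℂ :=
  ∑' k : ℕ, besselCoeff₁ m k * (x:ℂ) ^ ((k:ℂ) * m)

/-- `U₂(x) = x ∑_{k≥0} (−1)^k x^{km} / (k! mᵏ ∏_{j=1}^k (jm+1))`. -/
noncomputable def besselU₂ (m : ℂ) (x : ℝ) : ℂ :=
  (x:ℂ) * ∑' k : ℕ, besselCoeff₂ m k * (x:ℂ) ^ ((k:ℂ) * m)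

section RapidDecay

def RapidDecay (c : ℕ → ℂ) : Prop :=
  ∀ p : ℕ, Summable fun k : ℕ => (k : ℝ) ^ p * ‖c k‖

variable {c : ℕ → ℂ}

theorem RapidDecay.summable_norm (hc : RapidDecay c) : Summable fun k => ‖c k‖ := by
  simpa using hc 0

theorem RapidDecay.mul_natCast_mul_add (hc : RapidDecay c) (m s : ℂ) :
    RapidDecay fun k => c k * ((k : ℂ) * m + s) := by
  intro p
  refine .of_nonneg_of_le (fun k => by positivity) (fun k => ?_)
    (((hc (p + 1)).mul_left ‖m‖).add ((hc p).mul_left ‖s‖))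
  have hlin : ‖(k : ℂ) * m + s‖ ≤ k * ‖m‖ + ‖s‖ := by
    simpa only [norm_mul, Complex.norm_natCast] using norm_add_le ((k : ℂ) * m) s
  calc (k : ℝ) ^ p * ‖c k * ((k : ℂ) * m + s)‖ ≤ (k : ℝ) ^ p * (‖c k‖ * (k * ‖m‖ + ‖s‖)) := by
        rw [norm_mul]; gcongr
    _ = ‖m‖ * ((k : ℝ) ^ (p + 1) * ‖c k‖) + ‖s‖ * ((k : ℝ) ^ p * ‖c k‖) := by ring

theorem RapidDecay.of_mul_succ_eq {d : ℕ → ℂ} (hc₀ : c 0 ≠ 0) (hrec : ∀ k, c (k + 1) * d k = c k)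
    (hd : Tendsto (fun k => ‖d k‖) atTop atTop) : RapidDecay c := by
  have hc : ∀ k, c k ≠ 0 := by
    intro k
    induction k with
    | zero => exact hc₀
    | succ k ih => exact left_ne_zero_of_mul (hrec k ▸ ih)
  have hratio : ∀ k, ‖c (k + 1)‖ / ‖c k‖ = ‖d k‖⁻¹ := fun k => by
    rw [← hrec k, norm_mul, div_mul_cancel_left₀ (norm_ne_zero_iff.2 (hc (k + 1)))]
  intro p
  refine summable_of_ratio_test_tendsto_lt_one (l := 0) zero_lt_one ?_ ?_
  · filter_upwards [eventually_gt_atTop 0] with k hk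
    exact mul_ne_zero (pow_ne_zero _ (by positivity)) (norm_ne_zero_iff.2 (hc k))
  · have hpow : Tendsto (fun k : ℕ => (1 + 1 / (k : ℝ)) ^ p) atTop (𝓝 1) := by
      simpa using ((tendsto_one_div_atTop_nhds_zero_nat (𝕜 := ℝ)).const_add 1).pow p
    have hlim := hpow.mul hd.inv_tendsto_atTop
    rw [mul_zero] at hlim
    refine hlim.congr' ?_
    filter_upwards [eventually_gt_atTop 0] with k hk
    have hk' : (k : ℝ) ≠ 0 := by positivity
    simp only [Pi.inv_apply, norm_mul, norm_pow, Real.norm_natCast, norm_norm, ← hratio k]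
    push_cast
    rw [one_add_div hk', div_pow, div_mul_div_comm]

end RapidDecay

section Wronskian

/-- `f` is twice differentiable on `s` and solves `f'' + q f = 0` there. -/
def SolvesOn (q f : ℝ → ℂ) (s : Set ℝ) : Prop :=
  ∀ x ∈ s, HasDerivAt f (deriv f x) x ∧ HasDerivAt (deriv f) (-(q x * f x)) x

noncomputable def wronskian (f g : ℝ → ℂ) (x : ℝ) : ℂ :=
  f x * deriv g x - deriv f x * g x

variable {q f g : ℝ → ℂ} {s : Set ℝ} {x : ℝ}

theorem SolvesOn.deriv_deriv_add_mul (hf : SolvesOn q f s) (hx : x ∈ s) :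
    deriv (deriv f) x + q x * f x = 0 := by
  rw [(hf x hx).2.deriv, neg_add_cancel]

theorem SolvesOn.hasDerivAt_wronskian (hf : SolvesOn q f s) (hg : SolvesOn q g s) (hx : x ∈ s) :
    HasDerivAt (wronskian f g) 0 x := by
  obtain ⟨hf₁, hf₂⟩ := hf x hx
  obtain ⟨hg₁, hg₂⟩ := hg x hx
  exact ((hf₁.mul hg₂).sub (hf₂.mul hg₁)).congr_deriv (by ring)

theorem SolvesOn.wronskian_eq_of_tendsto {a b : ℝ} {L : ℂ} (hf : SolvesOn q f (Ioo a b))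
    (hg : SolvesOn q g (Ioo a b)) (hlim : Tendsto (wronskian f g) (𝓝[>] a) (𝓝 L))
    (hx : x ∈ Ioo a b) : wronskian f g x = L := by
  have hconst (y : ℝ) (hy : y ∈ Ioo a b) : wronskian f g y = wronskian f g x :=
    isOpen_Ioo.is_const_of_deriv_eq_zero isPreconnected_Ioo
      (fun z hz => (hf.hasDerivAt_wronskian hg hz).differentiableAt.differentiableWithinAt)
      (fun z hz => (hf.hasDerivAt_wronskian hg hz).deriv) hy hx
  refine tendsto_nhds_unique (tendsto_const_nhds.congr' ?_) hlim
  filter_upwards [Ioo_mem_nhdsGT (hx.1.trans hx.2)] with y hy using (hconst y hy).symm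

end Wronskian

section Frobenius

noncomputable def frobeniusSeries (c : ℕ → ℂ) (m s : ℂ) (x : ℝ) : ℂ :=
  ∑' k : ℕ, c k * (x : ℂ) ^ ((k : ℂ) * m + s)

theorem norm_ofReal_cpow_le_one {y : ℝ} (hy₀ : 0 < y) (hy₁ : y ≤ 1) {w : ℂ} (hw : 0 ≤ w.re) :
    ‖(y : ℂ) ^ w‖ ≤ 1 := by
  rw [Complex.norm_cpow_eq_rpow_re_of_pos hy₀]
  exact Real.rpow_le_one hy₀.le hy₁ hw

theorem norm_ofReal_cpow_natCast_mul_add_le {m s : ℂ} (hm : 0 ≤ m.re) (k : ℕ) {t y : ℝ}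
    (ht : 0 < t) (hty : t ≤ y) (hy : y ≤ 1) :
    ‖(y : ℂ) ^ ((k : ℂ) * m + s)‖ ≤ t ^ min s.re 0 := by
  have hy₀ := ht.trans_le hty
  have hre : min s.re 0 ≤ ((k : ℂ) * m + s).re := by
    simp only [Complex.add_re, Complex.mul_re, Complex.natCast_re, Complex.natCast_im, zero_mul,
      sub_zero]
    linarith [mul_nonneg k.cast_nonneg hm, min_le_left s.re 0]
  rw [Complex.norm_cpow_eq_rpow_re_of_pos hy₀]
  calc y ^ ((k : ℂ) * m + s).re ≤ y ^ min s.re 0 := Real.rpow_le_rpow_of_exponent_ge hy₀ hy hre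
    _ ≤ t ^ min s.re 0 := Real.rpow_le_rpow_of_nonpos ht hty (min_le_right _ _)

variable {c : ℕ → ℂ} {m s : ℂ}

theorem tendstoUniformlyOn_sum_mul_ofReal_cpow (hm : 0 ≤ m.re) (hc : Summable fun k => ‖c k‖) :
    TendstoUniformlyOn (fun N (x : ℝ) => ∑ k ∈ Finset.range N, c k * (x : ℂ) ^ ((k : ℂ) * m))
      (fun x : ℝ => ∑' k, c k * (x : ℂ) ^ ((k : ℂ) * m)) atTop (Ioc 0 1) := by
  refine tendstoUniformlyOn_tsum_nat hc fun k x hx => ?_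
  rw [norm_mul]
  refine mul_le_of_le_one_right (norm_nonneg _) (norm_ofReal_cpow_le_one hx.1 hx.2 ?_)
  simpa using mul_nonneg (Nat.cast_nonneg (α := ℝ) k) hm

theorem summable_mul_ofReal_cpow (hm : 0 ≤ m.re) (hc : Summable fun k => ‖c k‖) {x : ℝ}
    (hx : x ∈ Ioc 0 1) : Summable fun k => c k * (x : ℂ) ^ ((k : ℂ) * m + s) :=
  .of_norm_bounded (hc.mul_right (x ^ min s.re 0)) fun k => by
    rw [norm_mul]
    gcongr
    exact norm_ofReal_cpow_natCast_mul_add_le hm k hx.1 le_rfl hx.2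

theorem frobeniusSeries_add_exponent (c : ℕ → ℂ) (m s t : ℂ) {x : ℝ} (hx : x ≠ 0) :
    frobeniusSeries c m (s + t) x = (x : ℂ) ^ t * frobeniusSeries c m s x := by
  rw [frobeniusSeries, frobeniusSeries, ← tsum_mul_left]
  refine tsum_congr fun k => ?_
  rw [← add_assoc, Complex.cpow_add _ _ (Complex.ofReal_ne_zero.2 hx)]
  ring

theorem hasDerivAt_frobeniusSeries (hm : 0 ≤ m.re) (hc : Summable fun k => ‖c k‖)
    (hc' : Summable fun k => ‖c k * ((k : ℂ) * m + s)‖) {x : ℝ} (hx : x ∈ Ioo 0 1) :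
    HasDerivAt (frobeniusSeries c m s)
      (frobeniusSeries (fun k => c k * ((k : ℂ) * m + s)) m (s - 1) x) x := by
  have hx₂ : x ∈ Ioo (x / 2) 1 := ⟨half_lt_self hx.1, hx.2⟩
  refine hasDerivAt_tsum_of_isPreconnected (hc'.mul_right ((x / 2) ^ min (s - 1).re 0))
    isOpen_Ioo isPreconnected_Ioo (g := fun k (y : ℝ) => c k * (y : ℂ) ^ ((k : ℂ) * m + s))
    (g' := fun k (y : ℝ) => c k * ((k : ℂ) * m + s) * (y : ℂ) ^ ((k : ℂ) * m + (s - 1)))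
    (fun k y hy => ?_) (fun k y hy => ?_) hx₂ (summable_mul_ofReal_cpow hm hc ⟨hx.1, hx.2.le⟩) hx₂
  · have hy₀ : 0 < y := (half_pos hx.1).trans hy.1
    have hpow := (Complex.hasStrictDerivAt_cpow_const (c := (k : ℂ) * m + s)
      (Complex.ofReal_mem_slitPlane.2 hy₀)).hasDerivAt.comp_ofReal
    simpa only [mul_assoc, add_sub_assoc] using hpow.const_mul (c k)
  · rw [norm_mul]
    gcongr
    exact norm_ofReal_cpow_natCast_mul_add_le hm k (half_pos hx.1) hy.1.le hy.2.le

theorem frobeniusSeries_second_derivative_eq (hs : s * (s - 1) = 0)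
    (hrec : ∀ k : ℕ, c (k + 1) * (((k : ℂ) + 1) * m + s) * (((k : ℂ) + 1) * m + (s - 1)) = -c k)
    {x : ℝ} (hx : x ≠ 0) (hsum : Summable fun k => c k * ((k : ℂ) * m + s) *
      ((k : ℂ) * m + (s - 1)) * (x : ℂ) ^ ((k : ℂ) * m + (s - 1 - 1))) :
    frobeniusSeries (fun k => c k * ((k : ℂ) * m + s) * ((k : ℂ) * m + (s - 1))) m (s - 1 - 1) x
      = -((x : ℂ) ^ (m - 2) * frobeniusSeries c m s x) := by
  rw [frobeniusSeries, hsum.tsum_eq_zero_add, frobeniusSeries, ← tsum_mul_left, ← tsum_neg]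
  have hterm₀ : c 0 * (((0 : ℕ) : ℂ) * m + s) * (((0 : ℕ) : ℂ) * m + (s - 1)) *
      (x : ℂ) ^ (((0 : ℕ) : ℂ) * m + (s - 1 - 1)) = 0 := by
    simp only [Nat.cast_zero, zero_mul, zero_add]
    rw [mul_assoc (c 0), hs, mul_zero, zero_mul]
  rw [hterm₀, zero_add]
  refine tsum_congr fun k => ?_
  rw [show ((k + 1 : ℕ) : ℂ) * m + (s - 1 - 1) = (m - 2) + ((k : ℂ) * m + s) by push_cast; ring,
    Complex.cpow_add _ _ (Complex.ofReal_ne_zero.2 hx)]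
  push_cast
  linear_combination ((x : ℂ) ^ (m - 2) * (x : ℂ) ^ ((k : ℂ) * m + s)) * hrec k

theorem tendsto_frobeniusSeries_nhdsGT_zero (hm : 0 < m.re) (hc : Summable fun k => ‖c k‖) :
    Tendsto (frobeniusSeries c m 0) (𝓝[>] 0) (𝓝 (c 0)) := by
  have hm₀ : m ≠ 0 := fun h => by simp [h] at hm
  have hterm (k : ℕ) : Tendsto (fun x : ℝ => c k * (x : ℂ) ^ ((k : ℂ) * m + 0)) (𝓝[>] 0)
      (𝓝 (c k * (0 : ℂ) ^ ((k : ℂ) * m + 0))) := by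
    rcases k.eq_zero_or_pos with rfl | hk
    · simp
    · have hre : 0 < ((k : ℂ) * m + 0).re := by simpa using mul_pos (Nat.cast_pos.2 hk) hm
      simpa using ((Complex.continuousAt_ofReal_cpow_const 0 _ (.inl hre)).tendsto.mono_left
        nhdsWithin_le_nhds).const_mul (c k)
  have hlim := tendsto_tsum_of_dominated_convergence hc hterm ?_
  · rw [tsum_eq_single 0 fun k hk => by simp [Complex.zero_cpow, hk, hm₀]] at hlim
    rwa [Nat.cast_zero, zero_mul, add_zero, Complex.cpow_zero, mul_one] at hlim
  · filter_upwards [Ioc_mem_nhdsGT zero_lt_one] with x hx k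
    rw [norm_mul]
    refine mul_le_of_le_one_right (norm_nonneg _) (norm_ofReal_cpow_le_one hx.1 hx.2 ?_)
    simpa using mul_nonneg (Nat.cast_nonneg (α := ℝ) k) hm.le

theorem hasDerivAt_of_eqOn_frobeniusSeries {f : ℝ → ℂ} (hm : 0 ≤ m.re) (hc : RapidDecay c)
    (hf : EqOn f (frobeniusSeries c m s) (Ioo 0 1)) {x : ℝ} (hx : x ∈ Ioo 0 1) :
    HasDerivAt f (frobeniusSeries (fun k => c k * ((k : ℂ) * m + s)) m (s - 1) x) x :=
  (hasDerivAt_frobeniusSeries hm hc.summable_norm (hc.mul_natCast_mul_add m s).summable_norm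
    hx).congr_of_eventuallyEq (hf.eventuallyEq_of_mem (isOpen_Ioo.mem_nhds hx))

theorem solvesOn_of_eqOn_frobeniusSeries {f : ℝ → ℂ} (hm : 0 ≤ m.re)
    (hc : RapidDecay c) (hs : s * (s - 1) = 0)
    (hrec : ∀ k : ℕ, c (k + 1) * (((k : ℂ) + 1) * m + s) * (((k : ℂ) + 1) * m + (s - 1)) = -c k)
    (hf : EqOn f (frobeniusSeries c m s) (Ioo 0 1)) :
    SolvesOn (fun x => (x : ℂ) ^ (m - 2)) f (Ioo 0 1) := by
  intro x hx
  have hf' : EqOn (deriv f) (frobeniusSeries (fun k => c k * ((k : ℂ) * m + s)) m (s - 1))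
      (Ioo 0 1) := fun y hy => (hasDerivAt_of_eqOn_frobeniusSeries hm hc hf hy).deriv
  have hsum := summable_mul_ofReal_cpow (s := s - 1 - 1) hm
    ((hc.mul_natCast_mul_add m s).mul_natCast_mul_add m (s - 1)).summable_norm ⟨hx.1, hx.2.le⟩
  refine ⟨(hasDerivAt_of_eqOn_frobeniusSeries hm hc hf hx).differentiableAt.hasDerivAt, ?_⟩
  have h₂ := hasDerivAt_of_eqOn_frobeniusSeries hm (hc.mul_natCast_mul_add m s) hf' hx
  rwa [frobeniusSeries_second_derivative_eq hs hrec hx.1.ne' hsum, ← hf hx] at h₂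

end Frobenius

section Bessel

noncomputable def besselCoeff (m e : ℂ) (k : ℕ) : ℂ :=
  (-1) ^ k / ((k.factorial : ℂ) * m ^ k * ∏ j ∈ Finset.range k, (((j : ℂ) + 1) * m + e))

variable {m e : ℂ}

theorem besselCoeff₁_eq (m : ℂ) : besselCoeff₁ m = besselCoeff m (-1) := by
  ext k
  simp only [besselCoeff₁, besselCoeff, ← sub_eq_add_neg]

theorem besselCoeff₂_eq (m : ℂ) : besselCoeff₂ m = besselCoeff m 1 := rfl

theorem besselCoeff_succ_mul (hm : m ≠ 0) (he : ∀ j : ℕ, ((j : ℂ) + 1) * m + e ≠ 0) (k : ℕ) :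
    besselCoeff m e (k + 1) * (((k : ℂ) + 1) * m * (((k : ℂ) + 1) * m + e))
      = -besselCoeff m e k := by
  have hden (n : ℕ) :
      (n.factorial : ℂ) * m ^ n * ∏ j ∈ Finset.range n, (((j : ℂ) + 1) * m + e) ≠ 0 :=
    mul_ne_zero (mul_ne_zero (by exact_mod_cast n.factorial_ne_zero) (pow_ne_zero _ hm))
      (Finset.prod_ne_zero_iff.2 fun j _ => he j)
  unfold besselCoeff
  rw [div_mul_eq_mul_div, ← neg_div, div_eq_div_iff (hden _) (hden _), Finset.prod_range_succ]
  push_cast [Nat.factorial_succ]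
  ring

theorem rapidDecay_besselCoeff (hm : m ≠ 0) (he : ∀ j : ℕ, ((j : ℂ) + 1) * m + e ≠ 0) :
    RapidDecay (besselCoeff m e) := by
  have hlin : Tendsto (fun k : ℕ => ((k : ℝ) + 1) * ‖m‖) atTop atTop :=
    (tendsto_atTop_add_const_right _ 1 tendsto_natCast_atTop_atTop).atTop_mul_const
      (norm_pos_iff.2 hm)
  have hnorm (k : ℕ) : ‖((k : ℂ) + 1) * m‖ = ((k : ℝ) + 1) * ‖m‖ := by
    rw [norm_mul, ← Nat.cast_add_one, Complex.norm_natCast, Nat.cast_add_one]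
  have hshift : Tendsto (fun k : ℕ => ‖((k : ℂ) + 1) * m + e‖) atTop atTop :=
    tendsto_atTop_mono (fun k => by
      have h := norm_sub_norm_le (((k : ℂ) + 1) * m) (-e)
      rw [hnorm, norm_neg, sub_neg_eq_add] at h
      linarith) (tendsto_atTop_add_const_right _ (-‖e‖) hlin)
  refine RapidDecay.of_mul_succ_eq (d := fun k => -(((k : ℂ) + 1) * m * (((k : ℂ) + 1) * m + e)))
    (by simp [besselCoeff]) (fun k => by rw [mul_neg, besselCoeff_succ_mul hm he, neg_neg]) ?_
  simpa only [norm_neg, norm_mul, hnorm] using hlin.atTop_mul_atTop₀ hshift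

theorem natCast_add_one_mul_add_neg_one_ne_zero (hmn : ∀ n : ℕ, 1 ≤ n → m ≠ 1 / (n : ℂ)) (j : ℕ) :
    ((j : ℂ) + 1) * m + -1 ≠ 0 := by
  intro h
  refine hmn (j + 1) j.succ_pos ?_
  rw [eq_div_iff (Nat.cast_ne_zero.2 j.succ_ne_zero)]
  push_cast
  linear_combination h

theorem natCast_add_one_mul_add_one_ne_zero (hm : 0 ≤ m.re) (j : ℕ) :
    ((j : ℂ) + 1) * m + 1 ≠ 0 := by
  intro h
  have hre := congrArg Complex.re h
  simp only [Complex.add_re, Complex.mul_re, Complex.one_re, Complex.zero_re] at hre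
  norm_num at hre
  nlinarith [mul_nonneg (Nat.cast_nonneg (α := ℝ) j) hm]

theorem rapidDecay_besselCoeff₁ (hm : m ≠ 0) (hmn : ∀ n : ℕ, 1 ≤ n → m ≠ 1 / (n : ℂ)) :
    RapidDecay (besselCoeff₁ m) :=
  besselCoeff₁_eq m ▸ rapidDecay_besselCoeff hm (natCast_add_one_mul_add_neg_one_ne_zero hmn)

theorem rapidDecay_besselCoeff₂ (hm : 0 < m.re) : RapidDecay (besselCoeff₂ m) :=
  rapidDecay_besselCoeff (fun h => by simp [h] at hm)
    (natCast_add_one_mul_add_one_ne_zero hm.le)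

theorem besselU₁_eq_frobeniusSeries (m : ℂ) :
    besselU₁ m = frobeniusSeries (besselCoeff₁ m) m 0 := by
  ext x
  simp [besselU₁, frobeniusSeries]

theorem besselU₂_eq_frobeniusSeries (m : ℂ) {x : ℝ} (hx : x ≠ 0) :
    besselU₂ m x = frobeniusSeries (besselCoeff₂ m) m 1 x := by
  have h := frobeniusSeries_add_exponent (besselCoeff₂ m) m 0 1 hx
  rw [zero_add] at h
  rw [h, Complex.cpow_one, besselU₂, frobeniusSeries]
  simp

theorem solvesOn_besselU₁ (hm : 0 < m.re) (hmn : ∀ n : ℕ, 1 ≤ n → m ≠ 1 / (n : ℂ)) :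
    SolvesOn (fun x => (x : ℂ) ^ (m - 2)) (besselU₁ m) (Ioo 0 1) := by
  have hm₀ : m ≠ 0 := fun h => by simp [h] at hm
  rw [besselU₁_eq_frobeniusSeries]
  refine solvesOn_of_eqOn_frobeniusSeries hm.le (rapidDecay_besselCoeff₁ hm₀ hmn) (by ring)
    (fun k => ?_) (eqOn_refl _ _)
  rw [besselCoeff₁_eq]
  linear_combination besselCoeff_succ_mul hm₀ (natCast_add_one_mul_add_neg_one_ne_zero hmn) k

theorem solvesOn_besselU₂ (hm : 0 < m.re) :
    SolvesOn (fun x => (x : ℂ) ^ (m - 2)) (besselU₂ m) (Ioo 0 1) := by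
  have hm₀ : m ≠ 0 := fun h => by simp [h] at hm
  refine solvesOn_of_eqOn_frobeniusSeries hm.le (rapidDecay_besselCoeff₂ hm) (by ring)
    (fun k => ?_) (fun x hx => besselU₂_eq_frobeniusSeries m hx.1.ne')
  rw [besselCoeff₂_eq]
  linear_combination besselCoeff_succ_mul hm₀ (natCast_add_one_mul_add_one_ne_zero hm.le) k

theorem tendsto_wronskian_besselU (hm : 0 < m.re) (hmn : ∀ n : ℕ, 1 ≤ n → m ≠ 1 / (n : ℂ)) :
    Tendsto (wronskian (besselU₁ m) (besselU₂ m)) (𝓝[>] 0) (𝓝 1) := by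
  have hm₀ : m ≠ 0 := fun h => by simp [h] at hm
  set c₁ := besselCoeff₁ m
  set c₂ := besselCoeff₂ m
  have hc₁ : RapidDecay c₁ := rapidDecay_besselCoeff₁ hm₀ hmn
  have hc₂ : RapidDecay c₂ := rapidDecay_besselCoeff₂ hm
  have hU₁ : EqOn (besselU₁ m) (frobeniusSeries c₁ m 0) (Ioo 0 1) :=
    fun x _ => congrFun (besselU₁_eq_frobeniusSeries m) x
  have hU₂ : EqOn (besselU₂ m) (frobeniusSeries c₂ m 1) (Ioo 0 1) :=
    fun x hx => besselU₂_eq_frobeniusSeries m hx.1.ne'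
  have hW : EqOn (wronskian (besselU₁ m) (besselU₂ m))
      (fun x => frobeniusSeries c₁ m 0 x
          * frobeniusSeries (fun k => c₂ k * ((k : ℂ) * m + 1)) m 0 x
        - frobeniusSeries (fun k => c₁ k * ((k : ℂ) * m + 0)) m 0 x
          * frobeniusSeries c₂ m 0 x) (Ioo 0 1) := by
    intro x hx
    have hU₁' := frobeniusSeries_add_exponent (fun k => c₁ k * ((k : ℂ) * m + 0)) m 0 (-1) hx.1.ne'
    have hU₂' := frobeniusSeries_add_exponent c₂ m 0 1 hx.1.ne'
    rw [zero_add] at hU₁' hU₂'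
    rw [wronskian, (hasDerivAt_of_eqOn_frobeniusSeries hm.le hc₂ hU₂ hx).deriv,
      (hasDerivAt_of_eqOn_frobeniusSeries hm.le hc₁ hU₁ hx).deriv, hU₁ hx, hU₂ hx, sub_self,
      zero_sub, hU₁', hU₂', Complex.cpow_neg_one, Complex.cpow_one, mul_mul_mul_comm,
      inv_mul_cancel₀ (Complex.ofReal_ne_zero.2 hx.1.ne'), one_mul]
  have hlim := ((tendsto_frobeniusSeries_nhdsGT_zero hm hc₁.summable_norm).mul
      (tendsto_frobeniusSeries_nhdsGT_zero hm (hc₂.mul_natCast_mul_add m 1).summable_norm)).sub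
    ((tendsto_frobeniusSeries_nhdsGT_zero hm (hc₁.mul_natCast_mul_add m 0).summable_norm).mul
      (tendsto_frobeniusSeries_nhdsGT_zero hm hc₂.summable_norm))
  convert hlim.congr' (hW.symm.eventuallyEq_of_mem (Ioo_mem_nhdsGT zero_lt_one)) using 2
  simp [c₁, c₂, besselCoeff₁, besselCoeff₂]

end Bessel

theorem bessel_type_fundamental_system
    (m : ℂ) (hm : 0 < m.re) (hmn : ∀ n : ℕ, 1 ≤ n → m ≠ 1 / (n:ℂ)) :
    TendstoLocallyUniformlyOn
      (fun N : ℕ => fun x : ℝ => ∑ k ∈ Finset.range N, besselCoeff₁ m k * (x:ℂ) ^ ((k:ℂ) * m))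
      (besselU₁ m) atTop (Ioc 0 1) ∧
    TendstoLocallyUniformlyOn
      (fun N : ℕ => fun x : ℝ => ∑ k ∈ Finset.range N, besselCoeff₂ m k * (x:ℂ) ^ ((k:ℂ) * m))
      (fun x : ℝ => ∑' k : ℕ, besselCoeff₂ m k * (x:ℂ) ^ ((k:ℂ) * m)) atTop (Ioc 0 1) ∧
    (∀ x ∈ Ioo (0:ℝ) 1,
      DifferentiableAt ℝ (besselU₁ m) x ∧ DifferentiableAt ℝ (deriv (besselU₁ m)) x ∧
      deriv (deriv (besselU₁ m)) x + (x:ℂ) ^ (m - 2) * besselU₁ m x = 0) ∧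
    (∀ x ∈ Ioo (0:ℝ) 1,
      DifferentiableAt ℝ (besselU₂ m) x ∧ DifferentiableAt ℝ (deriv (besselU₂ m)) x ∧
      deriv (deriv (besselU₂ m)) x + (x:ℂ) ^ (m - 2) * besselU₂ m x = 0) ∧
    (∀ x ∈ Ioo (0:ℝ) 1,
      besselU₁ m x * deriv (besselU₂ m) x - deriv (besselU₁ m) x * besselU₂ m x = 1) := by
  have hm₀ : m ≠ 0 := fun h => by simp [h] at hm
  have hU₁ := solvesOn_besselU₁ hm hmn
  have hU₂ := solvesOn_besselU₂ hm
  refine ⟨(tendstoUniformlyOn_sum_mul_ofReal_cpow hm.le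
      (rapidDecay_besselCoeff₁ hm₀ hmn).summable_norm).tendstoLocallyUniformlyOn,
    (tendstoUniformlyOn_sum_mul_ofReal_cpow hm.le
      (rapidDecay_besselCoeff₂ hm).summable_norm).tendstoLocallyUniformlyOn,
    fun x hx => ⟨(hU₁ x hx).1.differentiableAt, (hU₁ x hx).2.differentiableAt,
      hU₁.deriv_deriv_add_mul hx⟩,
    fun x hx => ⟨(hU₂ x hx).1.differentiableAt, (hU₂ x hx).2.differentiableAt,
      hU₂.deriv_deriv_add_mul hx⟩,
    fun x hx => hU₁.wronskian_eq_of_tendsto hU₂ (tendsto_wronskian_besselU hm hmn) hx⟩
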